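/- arXiv:1611.02011 — 2 statements merged into one kernel-verified Lean document; each statement's English description precedes it below -/
import Mathlib

section
/- Let q > 1 and r ≥ 1 be integers and μ₀ = (1-10⁻⁴)^(1/(qr)) · e^(iπ/(2qr)). Then q/2 ≤ 1 + |μ₀^r| + |μ₀^(2r)| + ... + |μ₀^((q-1)r)| ≤ 10 · |1 + μ₀^r + μ₀^(2r) + ... + μ₀^((q-1)r)|. -/
open Finset

/-!
With `x = 1 - 10⁻⁴`, the powers `μ₀ ^ (n r)`, `n < q`, are the points `x ^ t e^(iπt/2)`,
`t = n / q`, of a logarithmic spiral in the first quadrant. Their moduli lie in `[x, 1]`, so the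
sum of the moduli lies in `[q x, q]` and `q x ≥ q / 2`. Their real parts are nonnegative, and at
least `(√2 / 2)² = 1 / 2` for the `⌈q / 2⌉` indices whose argument is at most `π / 4`; hence the
real part of the sum, and a fortiori its modulus, is at least `q / 4`.
-/

noncomputable def logSpiral (x t : ℝ) : ℂ :=
  ((x ^ t : ℝ) : ℂ) * Complex.exp ((t * (Real.pi / 2) : ℝ) * Complex.I)

section

open Real

variable {x t : ℝ}

lemma logSpiral_pow (hx : 0 ≤ x) (t : ℝ) (k : ℕ) : logSpiral x t ^ k = logSpiral x (t * k) := by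
  rw [logSpiral, logSpiral, mul_pow, ← Complex.ofReal_pow, ← rpow_natCast, ← rpow_mul hx,
    ← Complex.exp_nat_mul]
  push_cast
  ring_nf

lemma norm_logSpiral (hx : 0 ≤ x) (t : ℝ) : ‖logSpiral x t‖ = x ^ t := by
  rw [logSpiral, norm_mul, Complex.norm_exp_ofReal_mul_I, mul_one, Complex.norm_real,
    Real.norm_of_nonneg (rpow_nonneg hx t)]

lemma re_logSpiral (x t : ℝ) : (logSpiral x t).re = x ^ t * cos (t * (π / 2)) := by
  rw [logSpiral, Complex.re_ofReal_mul, Complex.exp_ofReal_mul_I_re]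

lemma re_logSpiral_nonneg (hx : 0 ≤ x) (ht₀ : 0 ≤ t) (ht₁ : t ≤ 1) : 0 ≤ (logSpiral x t).re := by
  rw [re_logSpiral]
  refine mul_nonneg (rpow_nonneg hx t) (cos_nonneg_of_mem_Icc ⟨?_, ?_⟩) <;> nlinarith [pi_pos]

lemma half_le_re_logSpiral (hx : √2 / 2 ≤ x) (hx₁ : x ≤ 1) (ht₀ : 0 ≤ t) (ht : t ≤ 1 / 2) :
    1 / 2 ≤ (logSpiral x t).re := by
  have hx₀ : 0 ≤ x := (by positivity : (0 : ℝ) ≤ √2 / 2).trans hx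
  have hcos : √2 / 2 ≤ cos (t * (π / 2)) := by
    rw [← cos_pi_div_four]
    apply cos_le_cos_of_nonneg_of_le_pi <;> nlinarith [pi_pos]
  have hsqrt : √2 / 2 * (√2 / 2) = 1 / 2 := by
    rw [div_mul_div_comm, mul_self_sqrt zero_le_two]; norm_num
  rw [re_logSpiral, ← hsqrt]
  exact mul_le_mul (hx.trans (self_le_rpow_of_le_one hx₀ hx₁ (by linarith))) hcos
    (by positivity) (rpow_nonneg hx₀ t)

end

lemma sum_norm_le_four_mul_norm_sum (w : ℕ → ℂ) (q : ℕ) (hw_norm : ∀ n < q, ‖w n‖ ≤ 1)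
    (hw_re : ∀ n < q, 0 ≤ (w n).re) (hw_re_half : ∀ n, 2 * n < q → 1 / 2 ≤ (w n).re) :
    ∑ n ∈ range q, ‖w n‖ ≤ 4 * ‖∑ n ∈ range q, w n‖ := by
  set m := (q + 1) / 2
  have hqm : (q : ℝ) ≤ 2 * m := by exact_mod_cast (by omega : q ≤ 2 * m)
  have hre_sum : (q : ℝ) / 4 ≤ (∑ n ∈ range q, w n).re :=
    calc (q : ℝ) / 4 ≤ ∑ _n ∈ range m, (1 / 2 : ℝ) := by
          simp only [sum_const, card_range, nsmul_eq_mul]; linarith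
      _ ≤ ∑ n ∈ range m, (w n).re :=
          sum_le_sum fun n hn => hw_re_half n (by have := mem_range.mp hn; omega)
      _ ≤ ∑ n ∈ range q, (w n).re :=
          sum_le_sum_of_subset_of_nonneg (range_subset_range.mpr (by omega))
            fun n hn _ => hw_re n (mem_range.mp hn)
      _ = (∑ n ∈ range q, w n).re := (Complex.re_sum _ _).symm
  calc ∑ n ∈ range q, ‖w n‖ ≤ ∑ _n ∈ range q, (1 : ℝ) :=
        sum_le_sum fun n hn => hw_norm n (mem_range.mp hn)
    _ = q := by simp
    _ ≤ 4 * ‖∑ n ∈ range q, w n‖ := by linarith [Complex.re_le_norm (∑ n ∈ range q, w n)]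

theorem stmt_1_general (q r : ℕ) (hr : 1 ≤ r) (μ₀ : ℂ)
    (hμ₀ : μ₀ = (((1 - 1/10^4 : ℝ) ^ ((1 : ℝ) / (q * r)) : ℝ) : ℂ) *
      Complex.exp (Complex.I * (Real.pi : ℂ) / (2 * (q : ℂ) * (r : ℂ)))) :
    (q : ℝ) / 2 ≤ ∑ n ∈ Finset.range q, ‖μ₀ ^ (n * r)‖ ∧
    ∑ n ∈ Finset.range q, ‖μ₀ ^ (n * r)‖ ≤ 10 * ‖∑ n ∈ Finset.range q, μ₀ ^ (n * r)‖ := by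
  set x : ℝ := 1 - 1 / 10 ^ 4
  have hx₀ : 0 < x := by norm_num [x]
  have hx₁ : x ≤ 1 := by norm_num [x]
  have hx_sqrt : √2 / 2 ≤ x := by
    nlinarith [Real.sq_sqrt (zero_le_two : (0 : ℝ) ≤ 2), Real.sqrt_nonneg 2]
  have hμ₀_spiral : μ₀ = logSpiral x (1 / (q * r)) := by
    rw [hμ₀, logSpiral]; push_cast; ring_nf
  have ht_mem (n : ℕ) (hn : n < q) : 0 ≤ (n : ℝ) / q ∧ (n : ℝ) / q ≤ 1 :=
    ⟨by positivity, div_le_one_of_le₀ (by exact_mod_cast hn.le) (by positivity)⟩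
  have hpow (n : ℕ) (hn : n < q) : μ₀ ^ (n * r) = logSpiral x (n / q) := by
    have : (q : ℝ) ≠ 0 := Nat.cast_ne_zero.mpr (by omega)
    have : (r : ℝ) ≠ 0 := Nat.cast_ne_zero.mpr (by omega)
    rw [hμ₀_spiral, logSpiral_pow hx₀.le]
    congr 1
    push_cast
    field_simp
  constructor
  · calc (q : ℝ) / 2 ≤ ∑ _n ∈ range q, x := by
          simp only [sum_const, card_range, nsmul_eq_mul]; nlinarith
      _ ≤ ∑ n ∈ range q, ‖μ₀ ^ (n * r)‖ := sum_le_sum fun n hn => by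
        rw [hpow n (mem_range.mp hn), norm_logSpiral hx₀.le]
        exact Real.self_le_rpow_of_le_one hx₀.le hx₁ (ht_mem n (mem_range.mp hn)).2
  · refine (sum_norm_le_four_mul_norm_sum _ q (fun n hn => ?_) (fun n hn => ?_)
      (fun n hn => ?_)).trans (by gcongr; norm_num)
    · rw [hpow n hn, norm_logSpiral hx₀.le]
      exact Real.rpow_le_one hx₀.le hx₁ (ht_mem n hn).1
    · rw [hpow n hn]
      exact re_logSpiral_nonneg hx₀.le (ht_mem n hn).1 (ht_mem n hn).2
    · rw [hpow n (by omega)]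
      refine half_le_re_logSpiral hx_sqrt hx₁ (ht_mem n (by omega)).1 ?_
      rw [div_le_iff₀ (Nat.cast_pos.mpr (by omega))]
      have : (2 * n : ℝ) ≤ q := by exact_mod_cast hn.le
      linarith

/-- For integers `q > 1`, `r ≥ 1` and
`μ₀ = (1 - 10⁻⁴)^(1/(qr)) · e^(iπ/(2qr))`, we have
`q/2 ≤ ∑_{n=0}^{q-1} |μ₀^(nr)| ≤ 10 · |∑_{n=0}^{q-1} μ₀^(nr)|`. -/
theorem stmt_1 (q r : ℕ) (hq : 1 < q) (hr : 1 ≤ r) (μ₀ : ℂ)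
    (hμ₀ : μ₀ = (((1 - 1/10^4 : ℝ) ^ ((1 : ℝ) / (q * r)) : ℝ) : ℂ) *
      Complex.exp (Complex.I * (Real.pi : ℂ) / (2 * (q : ℂ) * (r : ℂ)))) :
    (q : ℝ) / 2 ≤ ∑ n ∈ Finset.range q, ‖μ₀ ^ (n * r)‖ ∧
    ∑ n ∈ Finset.range q, ‖μ₀ ^ (n * r)‖ ≤ 10 * ‖∑ n ∈ Finset.range q, μ₀ ^ (n * r)‖ :=
  stmt_1_general q r hr μ₀ hμ₀
end

section
/- Suppose C > 10¹⁰ and 1/C < |h'(z)| < 2/C for all z in a domain, and let I_n be 3×3 matrices of the form [[m_n, b, σ(z_n - α)], [1, 0, 0], [λ, 0, μ]] with |m_n| > 2 for n ≥ 1, |b| < 10⁻¹⁰·w·s, |σ(z_n - α)| < 10⁻¹⁰·w·s, |λ| + |μ| < 1, where w, s > 0. Let v⁰ = (v⁰₁, v⁰₂, v⁰₃) with |v⁰₁| ≥ (1/100)·w·s, |v⁰₂| ≤ 1, |v⁰₃| ≤ 1, and define v^(n+1) = I_{n+1}·v^n. Then it is impossible that |v^n₁| < |v^n₃| for all n ≥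 0; i.e., there exists i with |v^i₁| ≥ |v^i₃|. -/
/-- transversality induction (Lemma `or7`). With matrices
`I_n = [[m_n, b, σ(z_n-α)],[1,0,0],[λ,0,μ]]`, `|m_n| > 2`, `|b| < 10⁻¹⁰ws`,
`|σ(z_n-α)| < 10⁻¹⁰ws`, `|λ|+|μ| < 1`, `|v⁰₁| ≥ ws/100`, `|v⁰₂| ≤ 1`, `|v⁰₃| ≤ 1`,
it is impossible that `|v^n₁| < |v^n₃|` for all `n`: there is `i` with
`|v^i₁| ≥ |v^i₃|`. -/
theorem stmt_15 (Cc : ℝ) (hCc : 10 ^ 10 < Cc)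
    (w s : ℝ) (hw : 0 < w) (hs : 0 < s)
    (m e : ℕ → ℂ) (b lam mu : ℂ)
    (hm : ∀ n, 1 ≤ n → 2 < ‖m n‖)
    (hb : ‖b‖ < (1/10^10) * w * s)
    (he : ∀ n, 1 ≤ n → ‖e n‖ < (1/10^10) * w * s)
    (hlm : ‖lam‖ + ‖mu‖ < 1)
    (v₁ v₂ v₃ : ℕ → ℂ)
    (hrec₁ : ∀ n, v₁ (n + 1) = m (n + 1) * v₁ n + b * v₂ n + e (n + 1) * v₃ n)
    (hrec₂ : ∀ n, v₂ (n + 1) = v₁ n)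
    (hrec₃ : ∀ n, v₃ (n + 1) = lam * v₁ n + mu * v₃ n)
    (h01 : (1/100) * w * s ≤ ‖v₁ 0‖) (h02 : ‖v₂ 0‖ ≤ 1) (h03 : ‖v₃ 0‖ ≤ 1) :
    ∃ i : ℕ, ‖v₃ i‖ ≤ ‖v₁ i‖ := by
  by_contra hcon
  push_neg at hcon
  have hws : 0 < w * s := mul_pos hw hs
  have key : ∀ n, ‖v₂ n‖ ≤ 1 ∧ ‖v₃ n‖ ≤ 1 ∧
      (3/2 : ℝ) ^ n * ((1/100) * w * s) ≤ ‖v₁ n‖ := by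
    intro n
    induction n with
    | zero => exact ⟨h02, h03, by simpa using h01⟩
    | succ n ih =>
      obtain ⟨ih2, ih3, ih1⟩ := ih
      have h13 : ‖v₁ n‖ < ‖v₃ n‖ := hcon n
      have h1le : ‖v₁ n‖ ≤ 1 := le_of_lt (lt_of_lt_of_le h13 ih3)
      have hlam : 0 ≤ ‖lam‖ := norm_nonneg _
      have hmu : 0 ≤ ‖mu‖ := norm_nonneg _
      have h3nn : 0 ≤ ‖v₃ n‖ := norm_nonneg _
      refine ⟨?_, ?_, ?_⟩
      · rw [hrec₂]; exact h1le
      · rw [hrec₃]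
        calc ‖lam * v₁ n + mu * v₃ n‖ ≤ ‖lam * v₁ n‖ + ‖mu * v₃ n‖ := norm_add_le _ _
          _ = ‖lam‖ * ‖v₁ n‖ + ‖mu‖ * ‖v₃ n‖ := by rw [norm_mul, norm_mul]
          _ ≤ ‖lam‖ * ‖v₃ n‖ + ‖mu‖ * ‖v₃ n‖ := by nlinarith
          _ ≤ 1 := by nlinarith
      · rw [hrec₁]
        have hm' : 2 < ‖m (n+1)‖ := hm (n+1) (Nat.le_add_left 1 n)
        have he' : ‖e (n+1)‖ < (1/10^10) * w * s := he (n+1) (Nat.le_add_left 1 n)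
        have hlow : ‖m (n+1) * v₁ n‖ - ‖b * v₂ n + e (n+1) * v₃ n‖ ≤
            ‖m (n+1) * v₁ n + (b * v₂ n + e (n+1) * v₃ n)‖ := by
          have h := norm_sub_norm_le (m (n+1) * v₁ n) (-(b * v₂ n + e (n+1) * v₃ n))
          rw [norm_neg, sub_neg_eq_add] at h
          exact h
        have hrw : m (n+1) * v₁ n + b * v₂ n + e (n+1) * v₃ n
            = m (n+1) * v₁ n + (b * v₂ n + e (n+1) * v₃ n) := by ring
        rw [hrw]
        have hsmall : ‖b * v₂ n + e (n+1) * v₃ n‖ ≤ 2 * ((1/10^10) * w * s) := by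
          calc ‖b * v₂ n + e (n+1) * v₃ n‖ ≤ ‖b‖ * ‖v₂ n‖ + ‖e (n+1)‖ * ‖v₃ n‖ := by
                refine (norm_add_le _ _).trans ?_
                rw [norm_mul, norm_mul]
          _ ≤ 2 * ((1/10^10) * w * s) := by
                have hbn : 0 ≤ ‖b‖ := norm_nonneg _
                have hen : 0 ≤ ‖e (n+1)‖ := norm_nonneg _
                have h2n : 0 ≤ ‖v₂ n‖ := norm_nonneg _
                nlinarith
        have hbig : 2 * ‖v₁ n‖ ≤ ‖m (n+1) * v₁ n‖ := by
          rw [norm_mul]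
          have h1nn : 0 ≤ ‖v₁ n‖ := norm_nonneg _
          nlinarith
        have hpow1 : (1 : ℝ) ≤ (3/2 : ℝ) ^ n := one_le_pow₀ (by norm_num)
        have hlb : (1/100) * w * s ≤ ‖v₁ n‖ := by
          have hpos : (0:ℝ) ≤ (1/100) * w * s := by positivity
          nlinarith [ih1, hpow1, hpos]
        have : (3/2 : ℝ) * ‖v₁ n‖ ≤ 2 * ‖v₁ n‖ - 2 * ((1/10^10) * w * s) := by
          nlinarith
        calc (3/2 : ℝ) ^ (n+1) * ((1/100) * w * s)
            = (3/2 : ℝ) * ((3/2 : ℝ) ^ n * ((1/100) * w * s)) := by ring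
          _ ≤ (3/2 : ℝ) * ‖v₁ n‖ :=
              mul_le_mul_of_nonneg_left ih1 (by norm_num)
          _ ≤ 2 * ‖v₁ n‖ - 2 * ((1/10^10) * w * s) := this
          _ ≤ ‖m (n+1) * v₁ n‖ - ‖b * v₂ n + e (n+1) * v₃ n‖ := by linarith
          _ ≤ _ := hlow
  obtain ⟨n, hn⟩ := pow_unbounded_of_one_lt (100 / (w * s)) (by norm_num : (1:ℝ) < 3/2)
  have h3le := (key n).2.1
  have h1lb := (key n).2.2
  have h13 := hcon n
  rw [div_lt_iff₀ hws] at hn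
  have heq : (3/2:ℝ)^n * ((1/100)*w*s) = ((3/2:ℝ)^n * (w*s))/100 := by ring
  linarith [h1lb, h3le, h13, hn, heq]
end
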